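/- Upper tail bound for the largest eigenvalue, case 0 < α ≤ 1: fix an integer d ≥ 3, α ∈ (0,1], and fix τ > 2/(α+2). Then P( λ₁(X) ≥ (log n)^{1/α} + (log n)^{τ/α} ) tends to 0 as n → ∞ (along integers n > d with nd even). -/

import Mathlib

open MeasureTheory ProbabilityTheory Filter Real
open scoped ENNReal NNReal

noncomputable section

instance matrixMeasurableSpace {m n α : Type*} [MeasurableSpace α] :
    MeasurableSpace (Matrix m n α) :=
  inferInstanceAs (MeasurableSpace (m → n → α))

/-- The largest eigenvalue of a real square matrix: the supremum of its real eigenvalues. -/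
def lam1 {n : ℕ} (M : Matrix (Fin n) (Fin n) ℝ) : ℝ :=
  sSup {r : ℝ | ∃ v : Fin n → ℝ, v ≠ 0 ∧ M.mulVec v = r • v}

/-- The set of adjacency matrices of simple `d`-regular graphs on `n` vertices:
symmetric 0-1 matrices with zero diagonal and all row sums equal to `d`. -/
def RegAdj (n d : ℕ) : Set (Matrix (Fin n) (Fin n) ℝ) :=
  {M | M.IsSymm ∧ (∀ i, M i i = 0) ∧ (∀ i j, M i j = 0 ∨ M i j = 1) ∧
    ∀ i, (∑ j, M i j) = (d : ℝ)}

/-- A Weibull distribution with shape parameter `α` and constants `C₁ C₂`. -/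
def IsWeibull (α C₁ C₂ : ℝ) (μ : Measure ℝ) : Prop :=
  IsProbabilityMeasure μ ∧
  ∀ t : ℝ, 1 ≤ t →
    ENNReal.ofReal (C₁ * Real.exp (-t ^ α) / 2) ≤ μ {x | t ≤ x} ∧
    μ {x | t ≤ x} ≤ ENNReal.ofReal (C₂ * Real.exp (-t ^ α) / 2) ∧
    ENNReal.ofReal (C₁ * Real.exp (-t ^ α) / 2) ≤ μ {x | x ≤ -t} ∧
    μ {x | x ≤ -t} ≤ ENNReal.ofReal (C₂ * Real.exp (-t ^ α) / 2)

/-- The weighted random `d`-regular graph model: `A` is uniformly distributed on the set of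
adjacency matrices of simple `d`-regular graphs on `n` vertices, `W` is a symmetric random
matrix with zero diagonal whose upper-triangular entries are i.i.d. with common law `μ`
(a Weibull law with shape parameter `α` and constants `C₁ C₂`), and `W` is independent
of `A`. -/
def WRRGModel (d : ℕ) (α C₁ C₂ : ℝ) {n : ℕ} {Ω : Type*} [MeasurableSpace Ω]
    (P : Measure Ω) (A W : Ω → Matrix (Fin n) (Fin n) ℝ) (μ : Measure ℝ) : Prop :=
  IsProbabilityMeasure P ∧ Measurable A ∧ Measurable W ∧
  (∀ ω, A ω ∈ RegAdj n d) ∧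
  (∀ M ∈ RegAdj n d, P {ω | A ω = M} = ((RegAdj n d).ncard : ℝ≥0∞)⁻¹) ∧
  (∀ ω, (W ω).IsSymm) ∧ (∀ ω i, W ω i i = 0) ∧
  IsWeibull α C₁ C₂ μ ∧
  (∀ i j : Fin n, i < j → Measure.map (fun ω => W ω i j) P = μ) ∧
  iIndepFun
    (fun (p : {p : Fin n × Fin n // p.1 < p.2}) (ω : Ω) => W ω p.1.1 p.1.2) P ∧
  IndepFun A W P

/-!
The largest eigenvalue of a real matrix is at most its largest absolute row sum (Gershgorin), so
by a union bound over the `n` rows it suffices to bound the tail of one row sum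
`∑ j, A u j * |W u j|`. Conditionally on `A` this is a sum of `d` independent absolute values of
Weibull variables, and for `α ≤ 1` the subadditivity of `t ↦ t ^ α` gives, by induction on the
number of summands, `P (Y₁ + ⋯ + Y_k ≥ T) ≤ C ^ k (T + 2) ^ k exp (-(T - k) ^ α)`.
For `T = L ^ (1 / α) + L ^ (τ / α)` with `L = log n`, concavity of `t ↦ t ^ α` gives
`T ^ α ≥ L + (2 ^ α - 1) L ^ ((α + τ - 1) / α)`, which beats both the factor `n = exp L` and the
polynomial factor as soon as `τ > 1 - α`; and `2 / (α + 2) > 1 - α`.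
-/

open scoped Topology

theorem measurable_matrix_entry {m n α : Type*} [MeasurableSpace α] (i : m) (j : n) :
    Measurable fun M : Matrix m n α => M i j :=
  (measurable_pi_apply j).comp (measurable_pi_apply i)

theorem rpow_max_zero_le_add {α : ℝ} (hα : 0 < α) (hα1 : α ≤ 1) (x : ℝ) {m : ℝ} (hm : 0 ≤ m) :
    max x 0 ^ α ≤ m ^ α + max (x - m) 0 ^ α := by
  rcases le_total 0 (x - m) with hxm | hxm
  · have := Real.rpow_add_le_add_rpow hm hxm hα.le hα1
    rw [add_sub_cancel] at this
    rw [max_eq_left (by linarith), max_eq_left hxm]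
    exact this
  · rw [max_eq_right hxm, Real.zero_rpow hα.ne', add_zero]
    exact Real.rpow_le_rpow (le_max_right _ _) (max_le (by linarith) hm) hα.le

theorem one_add_mul_le_one_add_rpow {α s : ℝ} (hα : 0 < α) (hα1 : α ≤ 1) (hs : 0 ≤ s)
    (hs1 : s ≤ 1) : 1 + (2 ^ α - 1) * s ≤ (1 + s) ^ α := by
  have h := (Real.concaveOn_rpow hα.le hα1).2 (Set.mem_Ici.2 zero_le_one)
    (Set.mem_Ici.2 zero_le_two) (sub_nonneg.2 hs1) hs (sub_add_cancel 1 s)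
  simp only [smul_eq_mul, Real.one_rpow] at h
  calc 1 + (2 ^ α - 1) * s = (1 - s) * 1 + s * 2 ^ α := by ring
    _ ≤ ((1 - s) * 1 + s * 2) ^ α := h
    _ = (1 + s) ^ α := by ring_nf

theorem abs_le_sum_abs_of_mulVec_eq_smul {n : ℕ} {M : Matrix (Fin n) (Fin n) ℝ} {r : ℝ}
    {v : Fin n → ℝ} (hv : v ≠ 0) (hMv : M.mulVec v = r • v) : ∃ i, |r| ≤ ∑ j, |M i j| := by
  have hr : Module.End.HasEigenvalue (Matrix.toLin' M) r :=
    Module.End.hasEigenvalue_of_hasEigenvector ⟨Module.End.mem_eigenspace_iff.2 hMv, hv⟩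
  obtain ⟨i, hi⟩ := eigenvalue_mem_ball hr
  refine ⟨i, ?_⟩
  rw [Metric.mem_closedBall, Real.dist_eq] at hi
  rw [← Finset.add_sum_erase _ _ (Finset.mem_univ i)]
  have := abs_sub_abs_le_abs_sub r (M i i)
  simp only [Real.norm_eq_abs] at hi
  linarith

theorem lam1_le_of_forall_sum_abs_le {n : ℕ} {M : Matrix (Fin n) (Fin n) ℝ} {B : ℝ} (hB : 0 ≤ B)
    (hrow : ∀ i, ∑ j, |M i j| ≤ B) : lam1 M ≤ B := by
  refine Real.sSup_le ?_ hB
  rintro r ⟨v, hv, hMv⟩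
  obtain ⟨i, hi⟩ := abs_le_sum_abs_of_mulVec_eq_smul hv hMv
  exact (le_abs_self r).trans (hi.trans (hrow i))

theorem exists_le_sum_abs_of_le_lam1 {n : ℕ} {M : Matrix (Fin n) (Fin n) ℝ} {T : ℝ} (hT : 0 < T)
    (h : T ≤ lam1 M) : ∃ i, T ≤ ∑ j, |M i j| := by
  by_contra! hrow
  cases isEmpty_or_nonempty (Fin n)
  · linarith [lam1_le_of_forall_sum_abs_le (M := M) le_rfl isEmptyElim]
  · obtain ⟨i, hi⟩ := Finite.exists_max fun i => ∑ j, |M i j|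
    have := lam1_le_of_forall_sum_abs_le (Finset.sum_nonneg fun j _ => abs_nonneg (M i j)) hi
    linarith [hrow i]

open Finset in
theorem ProbabilityTheory.IndepFun.measure_le_add_le_sum {Ω : Type*} [MeasurableSpace Ω]
    {P : Measure Ω} {Y Z : Ω → ℝ} (hYZ : IndepFun Y Z P) (hY : ∀ ω, 0 ≤ Y ω) (T : ℝ) (M : ℕ) :
    P {ω | T ≤ Y ω + Z ω} ≤
      ∑ m ∈ range M, P {ω | (m : ℝ) ≤ Y ω} * P {ω | T - (m + 1) ≤ Z ω} +
        P {ω | (M : ℝ) ≤ Y ω} := by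
  have hsub : {ω | T ≤ Y ω + Z ω} ⊆
      (⋃ m ∈ range M, Y ⁻¹' Set.Ici (m : ℝ) ∩ Z ⁻¹' Set.Ici (T - (m + 1))) ∪
        {ω | (M : ℝ) ≤ Y ω} := by
    intro ω hω
    rcases le_or_gt M ⌊Y ω⌋₊ with hM | hM
    · exact Or.inr ((Nat.cast_le.2 hM).trans (Nat.floor_le (hY ω)))
    · refine Or.inl (Set.mem_biUnion (mem_range.2 hM) ⟨Nat.floor_le (hY ω), ?_⟩)
      have hω' : T ≤ Y ω + Z ω := hω
      have := Nat.lt_floor_add_one (Y ω)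
      simp only [Set.mem_preimage, Set.mem_Ici]
      linarith
  calc P {ω | T ≤ Y ω + Z ω}
      ≤ P (⋃ m ∈ range M, Y ⁻¹' Set.Ici (m : ℝ) ∩ Z ⁻¹' Set.Ici (T - (m + 1))) +
          P {ω | (M : ℝ) ≤ Y ω} := (measure_mono hsub).trans (measure_union_le _ _)
    _ ≤ _ := by
      gcongr
      refine (measure_biUnion_finset_le _ _).trans (sum_le_sum fun m _ => ?_)
      rw [hYZ.measure_inter_preimage_eq_mul _ _ measurableSet_Ici measurableSet_Ici]
      rfl

def sumTailBound (C α : ℝ) (k : ℕ) (T : ℝ) : ℝ :=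
  C ^ k * (max T 0 + 2) ^ k * exp (-max (T - k) 0 ^ α)

section sumTailBound

variable {C α : ℝ}

theorem sumTailBound_nonneg (hC : 0 ≤ C) (k : ℕ) (T : ℝ) : 0 ≤ sumTailBound C α k T := by
  unfold sumTailBound
  have := le_max_right T 0
  positivity

theorem sumTailBound_mul_le (hα : 0 < α) (hα1 : α ≤ 1) (hC : 0 ≤ C) (k m : ℕ) (T : ℝ) :
    C * exp (-(m : ℝ) ^ α) * sumTailBound C α k (T - (m + 1)) ≤
      C ^ (k + 1) * (max T 0 + 2) ^ k * exp (-max (T - (k + 1)) 0 ^ α) := by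
  have hbase : max (T - (m + 1)) 0 + 2 ≤ max T 0 + 2 := by
    gcongr
    linarith [m.cast_nonneg (α := ℝ)]
  have hexp : -max (T - (m + 1) - k) 0 ^ α + -(m : ℝ) ^ α ≤ -max (T - (k + 1)) 0 ^ α := by
    have := rpow_max_zero_le_add hα hα1 (T - (k + 1)) m.cast_nonneg
    rw [show T - (k + 1) - m = T - (m + 1) - k by ring] at this
    linarith
  calc C * exp (-(m : ℝ) ^ α) * sumTailBound C α k (T - (m + 1))
      = C ^ (k + 1) * (max (T - (m + 1)) 0 + 2) ^ k *
          exp (-max (T - (m + 1) - k) 0 ^ α + -(m : ℝ) ^ α) := by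
        rw [sumTailBound, exp_add, pow_succ]; ring
    _ ≤ _ := by gcongr

theorem mul_exp_le_of_max_le (hα : 0 < α) (hC : 1 ≤ C) (k : ℕ) {T M : ℝ} (hM : max T 0 ≤ M) :
    C * exp (-M ^ α) ≤ C ^ (k + 1) * (max T 0 + 2) ^ k * exp (-max (T - (k + 1)) 0 ^ α) := by
  have hT := le_max_right T 0
  have hpow : max (T - (k + 1)) 0 ^ α ≤ M ^ α :=
    Real.rpow_le_rpow (le_max_right _ _)
      (max_le (by linarith [le_max_left T 0, k.cast_nonneg (α := ℝ)]) (hT.trans hM)) hα.le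
  calc C * exp (-M ^ α) ≤ C ^ (k + 1) * 1 * exp (-max (T - (k + 1)) 0 ^ α) := by
        rw [mul_one]
        gcongr
        · exact le_self_pow₀ hC k.succ_ne_zero
    _ ≤ _ := by
        gcongr
        exact one_le_pow₀ (by linarith)

end sumTailBound

theorem measure_le_sum_le_sumTailBound {Ω ι : Type*} [MeasurableSpace Ω] {P : Measure Ω}
    [IsProbabilityMeasure P] {α C : ℝ} (hα : 0 < α) (hα1 : α ≤ 1) (hC : 1 ≤ C)
    {Y : ι → Ω → ℝ} (hmeas : ∀ i, Measurable (Y i)) (hY : ∀ i ω, 0 ≤ Y i ω)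
    (hindep : iIndepFun Y P)
    (htail : ∀ i t, P {ω | t ≤ Y i ω} ≤ ENNReal.ofReal (C * exp (-max t 0 ^ α)))
    (s : Finset ι) (T : ℝ) :
    P {ω | T ≤ ∑ i ∈ s, Y i ω} ≤ ENNReal.ofReal (sumTailBound C α s.card T) := by
  classical
  have hC0 : 0 ≤ C := zero_le_one.trans hC
  induction s using Finset.induction_on generalizing T with
  | empty =>
    rcases le_or_gt T 0 with hT | hT
    · simp [sumTailBound, max_eq_right hT, Real.zero_rpow hα.ne', prob_le_one]
    · simp [hT.not_ge]
  | @insert i s hi IH =>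
    set E := C ^ (s.card + 1) * (max T 0 + 2) ^ s.card * exp (-max (T - (s.card + 1)) 0 ^ α)
    set M := ⌊max T 0⌋₊ + 1
    have hE : 0 ≤ E := by have := le_max_right T 0; positivity
    have hMT : max T 0 ≤ M := (Nat.lt_floor_add_one _).le.trans (by push_cast [M]; rfl)
    have hM : (M : ℝ) + 1 ≤ max T 0 + 2 := by
      push_cast [M]; linarith [Nat.floor_le (le_max_right T 0)]
    have hterm : ∀ m : ℕ, P {ω | (m : ℝ) ≤ Y i ω} * P {ω | T - (m + 1) ≤ ∑ j ∈ s, Y j ω} ≤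
        ENNReal.ofReal E := by
      intro m
      have h := mul_le_mul' (htail i m) (IH (T - (m + 1)))
      rw [max_eq_left m.cast_nonneg, ← ENNReal.ofReal_mul (by positivity)] at h
      exact h.trans (ENNReal.ofReal_le_ofReal (sumTailBound_mul_le hα hα1 hC0 _ _ _))
    have hlast : P {ω | (M : ℝ) ≤ Y i ω} ≤ ENNReal.ofReal E := by
      refine (htail i M).trans (ENNReal.ofReal_le_ofReal ?_)
      rw [max_eq_left M.cast_nonneg]
      exact mul_exp_le_of_max_le hα hC _ hMT
    -- Each of the `M + 1` terms below is at most `E`, and `M + 1 ≤ T⁺ + 2` is the new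
    -- polynomial factor.
    have hsplit := ((hindep.indepFun_finsetSum_of_notMem hmeas hi).symm).measure_le_add_le_sum
      (hY i) T M
    simp only [Finset.sum_apply] at hsplit
    calc P {ω | T ≤ ∑ j ∈ insert i s, Y j ω}
        ≤ ∑ m ∈ Finset.range M, P {ω | (m : ℝ) ≤ Y i ω} * P {ω | T - (m + 1) ≤ ∑ j ∈ s, Y j ω} +
            P {ω | (M : ℝ) ≤ Y i ω} := by simpa only [Finset.sum_insert hi] using hsplit
      _ ≤ ∑ _m ∈ Finset.range M, ENNReal.ofReal E + ENNReal.ofReal E := by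
        gcongr with m; exact hterm m
      _ = ENNReal.ofReal ((M + 1) * E) := by
        rw [Finset.sum_const, Finset.card_range, nsmul_eq_mul, ← ENNReal.ofReal_natCast,
          ← ENNReal.ofReal_mul M.cast_nonneg, ← ENNReal.ofReal_add (by positivity) hE, add_one_mul]
      _ ≤ ENNReal.ofReal ((max T 0 + 2) * E) := by gcongr
      _ = ENNReal.ofReal (sumTailBound C α (insert i s).card T) := by
        rw [Finset.card_insert_of_notMem hi, sumTailBound]
        push_cast [E]
        ring_nf

theorem IsWeibull.measure_le_abs_le {α C₁ C₂ : ℝ} {μ : Measure ℝ} (hμ : IsWeibull α C₁ C₂ μ)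
    (hα : 0 < α) (t : ℝ) :
    μ {x | t ≤ |x|} ≤ ENNReal.ofReal (max C₂ (exp 1) * exp (-max t 0 ^ α)) := by
  have : IsProbabilityMeasure μ := hμ.1
  rcases le_or_gt 1 t with ht | ht
  · obtain ⟨-, hup, -, hlow⟩ := hμ.2 t ht
    have hsub : {x : ℝ | t ≤ |x|} ⊆ {x | t ≤ x} ∪ {x | x ≤ -t} := fun x hx =>
      (le_abs'.1 (show t ≤ |x| from hx)).symm
    have hhalf : C₂ * exp (-t ^ α) / 2 ≤ max C₂ (exp 1) * exp (-t ^ α) / 2 := by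
      gcongr; exact le_max_left _ _
    calc μ {x | t ≤ |x|} ≤ μ {x | t ≤ x} + μ {x | x ≤ -t} :=
          (measure_mono hsub).trans (measure_union_le _ _)
      _ ≤ ENNReal.ofReal (max C₂ (exp 1) * exp (-t ^ α) / 2) +
            ENNReal.ofReal (max C₂ (exp 1) * exp (-t ^ α) / 2) := by
          gcongr <;> exact (by assumption : _ ≤ _).trans (ENNReal.ofReal_le_ofReal hhalf)
      _ = ENNReal.ofReal (max C₂ (exp 1) * exp (-max t 0 ^ α)) := by
          rw [← ENNReal.ofReal_add (by positivity) (by positivity), add_halves,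
            max_eq_left (show (0 : ℝ) ≤ t by linarith)]
  · have hpow : max t 0 ^ α ≤ 1 :=
      Real.rpow_le_one (le_max_right _ _) (max_le ht.le zero_le_one) hα.le
    refine prob_le_one.trans (ENNReal.one_le_ofReal.2 ?_)
    calc (1 : ℝ) ≤ exp 1 * exp (-max t 0 ^ α) := by
          rw [← exp_add]; exact one_le_exp (by linarith)
      _ ≤ max C₂ (exp 1) * exp (-max t 0 ^ α) := by gcongr; exact le_max_right _ _

theorem measure_le_sum_abs_le_of_iid_symm {Ω : Type*} [MeasurableSpace Ω] {P : Measure Ω}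
    [IsProbabilityMeasure P] {n : ℕ} {W : Ω → Matrix (Fin n) (Fin n) ℝ} {α C₁ C₂ : ℝ}
    {μ : Measure ℝ} (hα : 0 < α) (hα1 : α ≤ 1) (hμ : IsWeibull α C₁ C₂ μ) (hW : Measurable W)
    (hWsymm : ∀ ω, (W ω).IsSymm)
    (hlaw : ∀ i j : Fin n, i < j → Measure.map (fun ω => W ω i j) P = μ)
    (hindep : iIndepFun
      (fun (p : {p : Fin n × Fin n // p.1 < p.2}) (ω : Ω) => W ω p.1.1 p.1.2) P)
    {u : Fin n} {N : Finset (Fin n)} (huN : u ∉ N) (T : ℝ) :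
    P {ω | T ≤ ∑ j ∈ N, |W ω u j|} ≤
      ENNReal.ofReal (sumTailBound (max C₂ (exp 1)) α N.card T) := by
  have hentry : ∀ i j, Measurable fun ω => W ω i j := fun i j =>
    (measurable_matrix_entry i j).comp hW
  let edge : N → {p : Fin n × Fin n // p.1 < p.2} := fun j =>
    ⟨(min u j, max u j), min_lt_max.2 (ne_of_mem_of_not_mem j.2 huN).symm⟩
  have hedge : Function.Injective edge := by
    intro j k hjk
    simp only [edge, Subtype.mk.injEq, Prod.mk.injEq] at hjk
    have := ne_of_mem_of_not_mem j.2 huN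
    have := ne_of_mem_of_not_mem k.2 huN
    ext
    simp only [min_def, max_def, Fin.ext_iff, Fin.le_iff_val_le_val] at *
    split_ifs at hjk <;> omega
  let Y : N → Ω → ℝ := fun j ω => |W ω (edge j).1.1 (edge j).1.2|
  have hY : ∀ ω, ∑ j ∈ N, |W ω u j| = ∑ j, Y j ω := fun ω => by
    rw [← Finset.sum_coe_sort N]
    refine Finset.sum_congr rfl fun j _ => ?_
    rcases le_total u j with h | h
    · simp only [Y, edge, min_eq_left h, max_eq_right h]
    · simp only [Y, edge, min_eq_right h, max_eq_left h, (hWsymm ω).apply]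
  have htail : ∀ j t, P {ω | t ≤ Y j ω} ≤
      ENNReal.ofReal (max C₂ (exp 1) * exp (-max t 0 ^ α)) := fun j t => by
    refine le_of_eq_of_le ?_ (hμ.measure_le_abs_le hα t)
    rw [← hlaw _ _ (edge j).2,
      Measure.map_apply (hentry _ _) (measurableSet_le measurable_const measurable_abs)]
    rfl
  simp_rw [hY]
  simpa using measure_le_sum_le_sumTailBound hα hα1 (le_max_of_le_right (one_le_exp zero_le_one))
    (fun _ => (hentry _ _).abs) (fun _ _ => abs_nonneg _)
    ((hindep.precomp hedge).comp (fun _ => abs) fun _ => measurable_abs) htail Finset.univ T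

theorem ProbabilityTheory.IndepFun.measure_mem_le_of_forall {Ω α β : Type*} [MeasurableSpace Ω]
    [MeasurableSpace α] [MeasurableSpace β] {P : Measure Ω} [IsProbabilityMeasure P]
    {X : Ω → α} {Y : Ω → β} (hXY : IndepFun X Y P) (hX : Measurable X) (hY : Measurable Y)
    {s : Set (α × β)} (hs : MeasurableSet s) {B : ℝ≥0∞}
    (hB : ∀ ω, P {ω' | (X ω, Y ω') ∈ s} ≤ B) :
    P {ω | (X ω, Y ω) ∈ s} ≤ B := by
  have hsection : ∀ x, (P.map Y) (Prod.mk x ⁻¹' s) = P {ω' | (x, Y ω') ∈ s} := fun x =>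
    Measure.map_apply hY (measurable_prodMk_left hs)
  calc P {ω | (X ω, Y ω) ∈ s} = (P.map fun ω => (X ω, Y ω)) s :=
        (Measure.map_apply (hX.prodMk hY) hs).symm
    _ = ∫⁻ x, (P.map Y) (Prod.mk x ⁻¹' s) ∂(P.map X) := by
        rw [(indepFun_iff_map_prod_eq_prod_map_map hX.aemeasurable hY.aemeasurable).1 hXY,
          Measure.prod_apply hs]
    _ = ∫⁻ ω, P {ω' | (X ω, Y ω') ∈ s} ∂P := by
        rw [lintegral_map (measurable_measure_prodMk_left hs) hX]
        simp only [hsection]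
    _ ≤ ∫⁻ _, B ∂P := lintegral_mono hB
    _ = B := by simp

theorem nonneg_of_mem_RegAdj {n d : ℕ} {M : Matrix (Fin n) (Fin n) ℝ} (hM : M ∈ RegAdj n d)
    (i j : Fin n) : 0 ≤ M i j :=
  (hM.2.2.1 i j).elim (fun h => h.ge) fun h => h ▸ zero_le_one

theorem exists_finset_of_mem_RegAdj {n d : ℕ} {M : Matrix (Fin n) (Fin n) ℝ}
    (hM : M ∈ RegAdj n d) (u : Fin n) :
    ∃ N : Finset (Fin n), u ∉ N ∧ N.card = d ∧
      ∀ f : Fin n → ℝ, ∑ j, M u j * f j = ∑ j ∈ N, f j := by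
  classical
  obtain ⟨-, hdiag, h01, hrow⟩ := hM
  have hsum : ∀ f : Fin n → ℝ, ∑ j, M u j * f j = ∑ j ∈ {j | M u j = 1}, f j := fun f => by
    rw [Finset.sum_filter]
    refine Finset.sum_congr rfl fun j _ => ?_
    rcases h01 u j with h | h <;> simp [h]
  refine ⟨({j | M u j = 1} : Finset (Fin n)), by simp [hdiag], ?_, hsum⟩
  have := hsum 1
  simp only [Pi.one_apply, mul_one, Finset.sum_const, nsmul_one, hrow u] at this
  exact_mod_cast this.symm

namespace WRRGModel

variable {d : ℕ} {α C₁ C₂ : ℝ} {n : ℕ} {Ω : Type*} [MeasurableSpace Ω] {P : Measure Ω}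
  {A W : Ω → Matrix (Fin n) (Fin n) ℝ} {μ : Measure ℝ}

theorem measure_le_row_sum_le (h : WRRGModel d α C₁ C₂ P A W μ) (hα : 0 < α) (hα1 : α ≤ 1)
    (u : Fin n) (T : ℝ) :
    P {ω | T ≤ ∑ j, A ω u j * |W ω u j|} ≤
      ENNReal.ofReal (sumTailBound (max C₂ (exp 1)) α d T) := by
  obtain ⟨hP, hA, hW, hAreg, -, hWsymm, -, hμ, hlaw, hindep, hAW⟩ := h
  refine hAW.measure_mem_le_of_forall hA hW (s := {p | T ≤ ∑ j, p.1 u j * |p.2 u j|})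
    (measurableSet_le measurable_const (Finset.measurable_sum _ fun j _ =>
      ((measurable_matrix_entry u j).comp measurable_fst).mul
        ((measurable_matrix_entry u j).comp measurable_snd).abs)) fun ω => ?_
  obtain ⟨N, huN, hcard, hrow⟩ := exists_finset_of_mem_RegAdj (hAreg ω) u
  simp only [Set.mem_ofPred_eq, hrow]
  rw [← hcard]
  exact measure_le_sum_abs_le_of_iid_symm hα hα1 hμ hW hWsymm hlaw hindep huN T

theorem measure_le_lam1_le (h : WRRGModel d α C₁ C₂ P A W μ) (hα : 0 < α) (hα1 : α ≤ 1)
    {T : ℝ} (hT : 0 < T) :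
    P {ω | T ≤ lam1 (Matrix.hadamard (A ω) (W ω))} ≤
      ENNReal.ofReal (n * sumTailBound (max C₂ (exp 1)) α d T) := by
  have hrow : ∀ ω, T ≤ lam1 (Matrix.hadamard (A ω) (W ω)) →
      ∃ u, T ≤ ∑ j, A ω u j * |W ω u j| := fun ω hω => by
    obtain ⟨u, hu⟩ := exists_le_sum_abs_of_le_lam1 hT hω
    refine ⟨u, hu.trans_eq (Finset.sum_congr rfl fun j _ => ?_)⟩
    rw [Matrix.hadamard_apply, abs_mul, abs_of_nonneg (nonneg_of_mem_RegAdj (h.2.2.2.1 ω) u j)]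
  calc P {ω | T ≤ lam1 (Matrix.hadamard (A ω) (W ω))}
      ≤ P (⋃ u, {ω | T ≤ ∑ j, A ω u j * |W ω u j|}) :=
        measure_mono fun ω hω => Set.mem_iUnion.2 (hrow ω hω)
    _ ≤ ∑ u, P {ω | T ≤ ∑ j, A ω u j * |W ω u j|} := measure_iUnion_fintype_le _ _
    _ ≤ ∑ _u : Fin n, ENNReal.ofReal (sumTailBound (max C₂ (exp 1)) α d T) :=
        Finset.sum_le_sum fun u _ => h.measure_le_row_sum_le hα hα1 u T
    _ = _ := by
        rw [Finset.sum_const, Finset.card_univ, Fintype.card_fin, nsmul_eq_mul,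
          ENNReal.ofReal_mul n.cast_nonneg, ENNReal.ofReal_natCast]

end WRRGModel

theorem add_mul_rpow_le_rpow_add_rpow {α τ L : ℝ} (hα : 0 < α) (hα1 : α ≤ 1) (hτ : τ ≤ 1)
    (hL : 1 ≤ L) :
    L + (2 ^ α - 1) * L ^ ((α + τ - 1) / α) ≤ (L ^ (1 / α) + L ^ (τ / α)) ^ α := by
  have hL0 : 0 < L := zero_lt_one.trans_le hL
  set s := L ^ ((τ - 1) / α)
  have hs0 : 0 ≤ s := by positivity
  have hs1 : s ≤ 1 := Real.rpow_le_one_of_one_le_of_nonpos hL (div_nonpos_of_nonpos_of_nonneg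
    (by linarith) hα.le)
  have hb : L ^ (τ / α) = L ^ (1 / α) * s := by
    rw [← Real.rpow_add hL0]; congr 1; ring
  have hγ : L ^ ((α + τ - 1) / α) = L * s := by
    rw [show (α + τ - 1) / α = 1 + (τ - 1) / α by field_simp; ring, Real.rpow_add hL0,
      Real.rpow_one]
  calc L + (2 ^ α - 1) * L ^ ((α + τ - 1) / α) = L * (1 + (2 ^ α - 1) * s) := by rw [hγ]; ring
    _ ≤ L * (1 + s) ^ α := by gcongr; exact one_add_mul_le_one_add_rpow hα hα1 hs0 hs1
    _ = (L ^ (1 / α) + L ^ (τ / α)) ^ α := by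
      rw [hb, ← mul_one_add, Real.mul_rpow (by positivity) (by positivity),
        ← Real.rpow_mul hL0.le, one_div_mul_cancel hα.ne', Real.rpow_one]

theorem exp_mul_sumTailBound_le {C α τ L : ℝ} (hC : 0 ≤ C) (hα : 0 < α) (hα1 : α ≤ 1)
    (hτ : τ ≤ 1) (hL : 1 ≤ L) (d : ℕ) :
    exp L * sumTailBound C α d (L ^ (1 / α) + L ^ (τ / α)) ≤
      C ^ d * 4 ^ d * exp ((d : ℝ) ^ α) *
        (L ^ ((d : ℝ) / α) * exp (-((2 ^ α - 1) * L ^ ((α + τ - 1) / α)))) := by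
  have hL0 : 0 < L := zero_lt_one.trans_le hL
  set a := L ^ (1 / α)
  set T := a + L ^ (τ / α)
  have ha : 1 ≤ a := Real.one_le_rpow hL (by positivity)
  have hba : L ^ (τ / α) ≤ a := Real.rpow_le_rpow_of_exponent_le hL (by gcongr)
  have hT : max T 0 = T := max_eq_left (by positivity)
  have hpoly : (max T 0 + 2) ^ d ≤ 4 ^ d * L ^ ((d : ℝ) / α) := by
    calc (max T 0 + 2) ^ d ≤ (4 * a) ^ d := by rw [hT]; gcongr; linarith
      _ = 4 ^ d * L ^ ((d : ℝ) / α) := by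
        rw [mul_pow, ← Real.rpow_natCast a, ← Real.rpow_mul hL0.le, one_div_mul_eq_div]
  have hexp : -max (T - d) 0 ^ α ≤ (d : ℝ) ^ α - T ^ α := by
    have := rpow_max_zero_le_add hα hα1 T d.cast_nonneg
    rw [hT] at this
    linarith
  have hTα := add_mul_rpow_le_rpow_add_rpow hα hα1 hτ hL
  calc exp L * sumTailBound C α d T
      ≤ exp L * (C ^ d * (4 ^ d * L ^ ((d : ℝ) / α)) * exp ((d : ℝ) ^ α - T ^ α)) := by
        unfold sumTailBound; gcongr
    _ = C ^ d * 4 ^ d * exp ((d : ℝ) ^ α) *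
          (L ^ ((d : ℝ) / α) * exp (L - T ^ α)) := by
        rw [exp_sub, exp_sub]; field_simp
    _ ≤ _ := by gcongr; linarith

theorem tendsto_exp_mul_sumTailBound {C α τ : ℝ} (hC : 0 ≤ C) (hα : 0 < α) (hα1 : α ≤ 1)
    (hτ : 1 - α < τ) (hτ1 : τ ≤ 1) (d : ℕ) :
    Tendsto (fun L => exp L * sumTailBound C α d (L ^ (1 / α) + L ^ (τ / α))) atTop (𝓝 0) := by
  set γ := (α + τ - 1) / α
  have hγ : 0 < γ := div_pos (by linarith) hα
  have hc : 0 < (2 : ℝ) ^ α - 1 := sub_pos.2 (Real.one_lt_rpow one_lt_two hα)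
  have hmajor : Tendsto (fun L : ℝ => L ^ ((d : ℝ) / α) * exp (-((2 ^ α - 1) * L ^ γ)))
      atTop (𝓝 0) := by
    refine ((tendsto_rpow_mul_exp_neg_mul_atTop_nhds_zero ((d : ℝ) / α / γ) _ hc).comp
      (tendsto_rpow_atTop hγ)).congr' ?_
    filter_upwards [eventually_ge_atTop 0] with L hL
    simp only [Function.comp_apply, neg_mul, ← Real.rpow_mul hL, mul_div_cancel₀ _ hγ.ne']
  have hlim := hmajor.const_mul (C ^ d * 4 ^ d * exp ((d : ℝ) ^ α))
  rw [mul_zero] at hlim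
  refine squeeze_zero' (Eventually.of_forall fun L => ?_) ?_ hlim
  · exact mul_nonneg (exp_pos L).le (sumTailBound_nonneg hC d _)
  · filter_upwards [eventually_ge_atTop 1] with L hL
    exact exp_mul_sumTailBound_le hC hα hα1 hτ1 hL d

theorem one_sub_lt_two_div_add_two {α : ℝ} (hα : 0 < α) : 1 - α < 2 / (α + 2) := by
  rw [lt_div_iff₀ (by linarith)]
  nlinarith

theorem largest_eigenvalue_upper_tail_heavy_general
    (d : ℕ) (α : ℝ) (hα : 0 < α) (hα1 : α ≤ 1)
    (τ : ℝ) (hτ : 2 / (α + 2) < τ)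
    (C₁ C₂ : ℝ)
    (Ω : ℕ → Type*) [∀ n, MeasurableSpace (Ω n)]
    (P : ∀ n, Measure (Ω n))
    (A W : ∀ n, Ω n → Matrix (Fin n) (Fin n) ℝ)
    (μ : ℕ → Measure ℝ)
    (hmodel : ∀ n, d < n → Even (n * d) →
      WRRGModel d α C₁ C₂ (P n) (A n) (W n) (μ n)) :
    Tendsto
      (fun n => P n {ω |
        Real.log n ^ (1 / α) + Real.log n ^ (τ / α) ≤
          lam1 (Matrix.hadamard (A n ω) (W n ω))})
      (atTop ⊓ 𝓟 {n : ℕ | d < n ∧ Even (n * d)}) (nhds 0) := by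
  -- The estimate needs `τ ≤ 1`, and the event shrinks as `τ` grows.
  set τ' := min τ 1
  have hτ' : 1 - α < τ' := lt_min ((one_sub_lt_two_div_add_two hα).trans hτ) (by linarith)
  have hlog : Tendsto (fun n : ℕ => log n) atTop atTop :=
    tendsto_log_atTop.comp tendsto_natCast_atTop_atTop
  have hbound := (tendsto_exp_mul_sumTailBound (le_max_of_le_right (b := C₂) (exp_pos 1).le)
    hα hα1 hτ' (min_le_right τ 1) d).comp hlog
  rw [← ENNReal.ofReal_zero]
  refine tendsto_of_tendsto_of_tendsto_of_le_of_le' tendsto_const_nhds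
    ((ENNReal.tendsto_ofReal hbound).mono_left inf_le_left)
    (Eventually.of_forall fun n => ENNReal.ofReal_zero.trans_le zero_le) ?_
  rw [eventually_inf_principal]
  filter_upwards [hlog.eventually_ge_atTop 1] with n hn ⟨hdn, heven⟩
  have hT : log n ^ (1 / α) + log n ^ (τ' / α) ≤ log n ^ (1 / α) + log n ^ (τ / α) := by
    gcongr
    exact min_le_left τ 1
  calc P n {ω | log n ^ (1 / α) + log n ^ (τ / α) ≤ lam1 (Matrix.hadamard (A n ω) (W n ω))}
      ≤ P n {ω | log n ^ (1 / α) + log n ^ (τ' / α) ≤ lam1 (Matrix.hadamard (A n ω) (W n ω))} :=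
        measure_mono fun ω hω => hT.trans hω
    _ ≤ ENNReal.ofReal (n * sumTailBound (max C₂ (exp 1)) α d
          (log n ^ (1 / α) + log n ^ (τ' / α))) :=
        (hmodel n hdn heven).measure_le_lam1_le hα hα1 (by positivity)
    _ = _ := by rw [Function.comp_apply, exp_log (by norm_cast; omega)]

/-- **Upper tail bound for the largest eigenvalue, case `0 < α ≤ 1`.** -/
theorem largest_eigenvalue_upper_tail_heavy
    (d : ℕ) (hd : 3 ≤ d) (α : ℝ) (hα : 0 < α) (hα1 : α ≤ 1)
    (τ : ℝ) (hτ : 2 / (α + 2) < τ)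
    (C₁ C₂ : ℝ) (hC₁ : 0 < C₁) (hC₂ : 0 < C₂)
    (Ω : ℕ → Type*) [∀ n, MeasurableSpace (Ω n)]
    (P : ∀ n, Measure (Ω n))
    (A W : ∀ n, Ω n → Matrix (Fin n) (Fin n) ℝ)
    (μ : ℕ → Measure ℝ)
    (hmodel : ∀ n, d < n → Even (n * d) →
      WRRGModel d α C₁ C₂ (P n) (A n) (W n) (μ n)) :
    Tendsto
      (fun n => P n {ω |
        Real.log n ^ (1 / α) + Real.log n ^ (τ / α) ≤
          lam1 (Matrix.hadamard (A n ω) (W n ω))})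
      (atTop ⊓ 𝓟 {n : ℕ | d < n ∧ Even (n * d)}) (nhds 0) :=
  largest_eigenvalue_upper_tail_heavy_general d α hα hα1 τ hτ C₁ C₂ Ω P A W μ hmodel
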